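/- Let r, s be real numbers with r·s ≠ 0 and let M₁ = [[1, 1], [−1, −1]], M₂ = [[r², r·s], [−r·s, −s²]], M₃ = [[r², 2r²s], [0, 0]] be 2×2 real matrices. Then there exist invertible 2×2 real matrices g and h such that gᵀ·M₁·g = M₂ and hᵀ·M₁·h = M₃. -/
import Mathlib

open Matrix

/-- For `rs ≠ 0`, the matrices `[[1,1],[−1,−1]]`, `[[r²,rs],[−rs,−s²]]` and
`[[r²,2r²s],[0,0]]` lie on the same `GL(2,ℝ)` congruence orbit. -/
theorem same_congruence_orbit (r s : ℝ) (hrs : r * s ≠ 0) :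
    (∃ g : Matrix (Fin 2) (Fin 2) ℝ, IsUnit g ∧
        gᵀ * !![(1 : ℝ), 1; -1, -1] * g = !![r ^ 2, r * s; -(r * s), -s ^ 2]) ∧
      ∃ h : Matrix (Fin 2) (Fin 2) ℝ, IsUnit h ∧
        hᵀ * !![(1 : ℝ), 1; -1, -1] * h = !![r ^ 2, 2 * r ^ 2 * s; 0, 0] := by
  have hr : r ≠ 0 := fun h => hrs (by simp [h])
  constructor
  · refine ⟨!![r, 0; 0, s], ?_, ?_⟩
    · rw [Matrix.isUnit_iff_isUnit_det, Matrix.det_fin_two_of]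
      simpa using hrs.isUnit
    · ext i j
      fin_cases i <;> fin_cases j <;>
        simp [Matrix.mul_apply, Fin.sum_univ_two, Matrix.transpose_apply,
          Matrix.vecHead, Matrix.vecTail] <;> ring
  · refine ⟨!![r, r * s; 0, r * s], ?_, ?_⟩
    · rw [Matrix.isUnit_iff_isUnit_det, Matrix.det_fin_two_of]
      simp only [mul_zero, sub_zero]
      exact hr.isUnit.mul hrs.isUnit
    · ext i j
      fin_cases i <;> fin_cases j <;>
        simp [Matrix.mul_apply, Fin.sum_univ_two, Matrix.transpose_apply,
          Matrix.vecHead, Matrix.vecTail] <;> ring
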